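/- arXiv:1909.12760 — 8 statements merged into one kernel-verified Lean document; each statement's English description precedes it below -/
import Mathlib

section
/- For every subset F ⊆ E, 1 − ∏_{e∈F}(1 − (1−γ)·p(e)) ≥ (1−γ)·(1 − ∏_{e∈F}(1 − p(e))). In words: scaling all existence probabilities down by a factor (1−γ) decreases the probability that at least one element of F exists by at most a factor (1−γ). -/
/-!
Writing `1 - c * p = (1 - c) • 1 + c • (1 - p)` with `c = 1 - γ`, the claim says that the product of
these convex combinations is at most the same convex combination of the products `1` and
`∏ (1 - p e)`. This follows by induction on `F`, since
`1 - c + c * (1 - a) * (1 - b) - (1 - c * a) * (1 - c * b) = c * (1 - c) * a * b ≥ 0`.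
-/

open Finset

theorem prod_one_sub_mul_le {ι : Type*} (s : Finset ι) (p : ι → ℝ) {c : ℝ} (hc₀ : 0 ≤ c)
    (hc₁ : c ≤ 1) (hp : ∀ i ∈ s, 0 ≤ p i ∧ p i ≤ 1) :
    ∏ i ∈ s, (1 - c * p i) ≤ 1 - c + c * ∏ i ∈ s, (1 - p i) := by
  classical
  induction s using Finset.induction_on with
  | empty => simp
  | insert x s hx ih =>
    obtain ⟨hpx₀, hpx₁⟩ := hp x (mem_insert_self x s)
    have hps : ∀ i ∈ s, 0 ≤ p i ∧ p i ≤ 1 := fun i hi => hp i (mem_insert_of_mem hi)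
    set B := ∏ i ∈ s, (1 - p i)
    have hB : B ≤ 1 := prod_le_one (fun i hi => by linarith [hps i hi])
      (fun i hi => by linarith [hps i hi])
    rw [prod_insert hx, prod_insert hx]
    calc (1 - c * p x) * ∏ i ∈ s, (1 - c * p i)
        ≤ (1 - c * p x) * (1 - c + c * B) :=
          mul_le_mul_of_nonneg_left (ih hps) (by nlinarith)
      _ = 1 - c + c * ((1 - p x) * B) - c * (1 - c) * (p x * (1 - B)) := by ring
      _ ≤ 1 - c + c * ((1 - p x) * B) := by
          have := mul_nonneg (mul_nonneg hc₀ (sub_nonneg.2 hc₁)) (mul_nonneg hpx₀ (sub_nonneg.2 hB))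
          linarith

/-- Scaling all existence probabilities down by a factor `(1 - γ)` decreases the
probability that at least one element of `F` exists by at most a factor `(1 - γ)`:
`1 − ∏_{e∈F}(1 − (1−γ)·p e) ≥ (1−γ)·(1 − ∏_{e∈F}(1 − p e))`. -/
theorem scaled_probability_lower_bound
    {α : Type*} (E : Finset α) (p : α → ℝ)
    (hp : ∀ e ∈ E, 0 ≤ p e ∧ p e ≤ 1)
    (γ : ℝ) (hγ : 0 ≤ γ ∧ γ ≤ 1) :
    ∀ F ⊆ E,
      1 - ∏ e ∈ F, (1 - (1 - γ) * p e) ≥ (1 - γ) * (1 - ∏ e ∈ F, (1 - p e)) := by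
  intro F hF
  have := prod_one_sub_mul_le F p (sub_nonneg.2 hγ.2) (by linarith [hγ.1]) fun e he => hp e (hF he)
  linarith
end

section
/- Let x : E → ℝ satisfy ∑_{e∈F} x(e) ≤ f(F) for every F ⊆ E. Then the scaled vector (1−γ)·x satisfies ∑_{e∈F} (1−γ)·x(e) ≤ f̃(F) for every F ⊆ E. That is, scaling the polytope defined by the constraints with right-hand sides f by a factor (1−γ) gives a subset of the polytope defined by the constraints with right-hand sides f̃. -/
/-!
With `t = 1 - γ`, the claim follows from `t · f(F) ≤ f̃(F)`, i.e. from
`t · (1 - ∏ (1 - q e)) ≤ 1 - ∏ (1 - t · q e)` for `q e, t ∈ [0, 1]`. This is proved by induction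
on `F`: adding an element `b` to `s` changes the difference of the two sides by
`t · q b · (1 - t) · (1 - ∏_{e ∈ s} (1 - q e)) ≥ 0`.
-/

open Finset

theorem mul_one_sub_prod_one_sub_le {ι R : Type*} [CommRing R] [LinearOrder R]
    [IsStrictOrderedRing R] (s : Finset ι) (q : ι → R) (hq : ∀ e ∈ s, 0 ≤ q e ∧ q e ≤ 1)
    {t : R} (ht₀ : 0 ≤ t) (ht₁ : t ≤ 1) :
    t * (1 - ∏ e ∈ s, (1 - q e)) ≤ 1 - ∏ e ∈ s, (1 - t * q e) := by
  classical
  induction s using Finset.induction_on with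
  | empty => simp
  | insert b s hb ih =>
    obtain ⟨hqb₀, hqb₁⟩ := hq b (mem_insert_self b s)
    have hqs : ∀ e ∈ s, 0 ≤ q e ∧ q e ≤ 1 := fun e he => hq e (mem_insert_of_mem he)
    have hQ : ∏ e ∈ s, (1 - q e) ≤ 1 :=
      prod_le_one (fun e he => sub_nonneg.2 (hqs e he).2)
        (fun e he => sub_le_self 1 (hqs e he).1)
    have hfactor : 0 ≤ 1 - t * q b := sub_nonneg.2 (mul_le_one₀ ht₁ hqb₀ hqb₁)
    rw [prod_insert hb, prod_insert hb]
    have hstep := mul_le_mul_of_nonneg_left (ih hqs) hfactor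
    nlinarith [mul_nonneg (mul_nonneg (mul_nonneg ht₀ hqb₀) (sub_nonneg.2 ht₁)) (sub_nonneg.2 hQ)]

/-- Scaling a point of the polytope `{x : ∑_{e∈F} x e ≤ f F ∀ F ⊆ E}` by `(1 - γ)`
gives a point of the polytope with right-hand sides
`f̃(F) = 1 − ∏_{e∈F}(1 − (1−γ)·p e)`. -/
theorem scaled_point_in_scaled_polytope
    {α : Type*} (E : Finset α) (p : α → ℝ)
    (hp : ∀ e ∈ E, 0 ≤ p e ∧ p e ≤ 1)
    (γ : ℝ) (hγ : 0 ≤ γ ∧ γ ≤ 1)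
    (x : α → ℝ)
    (hx : ∀ F ⊆ E, ∑ e ∈ F, x e ≤ 1 - ∏ e ∈ F, (1 - p e)) :
    ∀ F ⊆ E, ∑ e ∈ F, (1 - γ) * x e ≤ 1 - ∏ e ∈ F, (1 - (1 - γ) * p e) := by
  intro F hF
  calc ∑ e ∈ F, (1 - γ) * x e = (1 - γ) * ∑ e ∈ F, x e := (mul_sum F x (1 - γ)).symm
    _ ≤ (1 - γ) * (1 - ∏ e ∈ F, (1 - p e)) :=
      mul_le_mul_of_nonneg_left (hx F hF) (sub_nonneg.2 hγ.2)
    _ ≤ 1 - ∏ e ∈ F, (1 - (1 - γ) * p e) :=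
      mul_one_sub_prod_one_sub_le F p (fun e he => hp e (hF he)) (sub_nonneg.2 hγ.2)
        (sub_le_self 1 hγ.1)
end

section
/- Let x : E → ℝ satisfy ∑_{e∈F} x(e) ≤ f(F) for every F ⊆ E. If A, B ⊆ E are two sets that are both tight for x, i.e. ∑_{e∈A} x(e) = f(A) and ∑_{e∈B} x(e) = f(B), then A ⊆ B or B ⊆ A. -/
/-!
Write `f F = 1 - ∏_{e∈F} q e` with `q = 1 - p ∈ (0, 1)`. Splitting `A ∪ B` into `A \ B`, `A ∩ B`
and `B \ A` gives the exact submodularity gap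
`f A + f B - f (A ∪ B) - f (A ∩ B) = ∏_{A∩B} q · (1 - ∏_{A\B} q) · (1 - ∏_{B\A} q)`,
which is strictly positive as soon as `A` and `B` are incomparable. Adding the tightness equalities
for `A` and `B` and the constraints for `A ∪ B` and `A ∩ B` then contradicts this strict gap.
-/

namespace Finset

variable {ι : Type*} [DecidableEq ι]

theorem prod_union_add_prod_inter_sub_prod_sub_prod {R : Type*} [CommRing R]
    (s t : Finset ι) (g : ι → R) :
    ∏ i ∈ s ∪ t, g i + ∏ i ∈ s ∩ t, g i - ∏ i ∈ s, g i - ∏ i ∈ t, g i =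
      (∏ i ∈ s ∩ t, g i) * (1 - ∏ i ∈ s \ t, g i) * (1 - ∏ i ∈ t \ s, g i) := by
  have hs := prod_inter_mul_prod_sdiff s t g
  have ht := prod_inter_mul_prod_sdiff t s g
  have hst : ∏ i ∈ s ∪ t, g i = (∏ i ∈ s, g i) * ∏ i ∈ t \ s, g i := by
    rw [← union_sdiff_self_eq_union, prod_union disjoint_sdiff]
  rw [inter_comm] at ht
  rw [hst, ← hs, ← ht]
  ring

theorem prod_lt_one_of_nonempty {R : Type*} [CommSemiring R] [PartialOrder R]
    [IsStrictOrderedRing R] {s : Finset ι} {g : ι → R} (h0 : ∀ i ∈ s, 0 ≤ g i)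
    (h1 : ∀ i ∈ s, g i < 1) (hs : s.Nonempty) : ∏ i ∈ s, g i < 1 := by
  obtain ⟨j, hj⟩ := hs
  rw [← prod_erase_mul s g hj]
  exact mul_lt_one_of_nonneg_of_lt_one_right
    (prod_le_one (fun i hi ↦ h0 i (mem_of_mem_erase hi)) fun i hi ↦ (h1 i (mem_of_mem_erase hi)).le)
    (h0 j hj) (h1 j hj)

theorem prod_add_prod_lt_prod_union_add_prod_inter {R : Type*} [CommRing R] [LinearOrder R]
    [IsStrictOrderedRing R] {g : ι → R} {s t : Finset ι}
    (h0 : ∀ i ∈ s ∪ t, 0 < g i) (h1 : ∀ i ∈ s ∪ t, g i < 1) (hst : ¬s ⊆ t) (hts : ¬t ⊆ s) :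
    ∏ i ∈ s, g i + ∏ i ∈ t, g i < ∏ i ∈ s ∪ t, g i + ∏ i ∈ s ∩ t, g i := by
  have hs : ∏ i ∈ s \ t, g i < 1 := by
    have hsub : s \ t ⊆ s ∪ t := sdiff_subset.trans subset_union_left
    exact prod_lt_one_of_nonempty (fun i hi ↦ (h0 i (hsub hi)).le) (fun i hi ↦ h1 i (hsub hi))
      (sdiff_nonempty.2 hst)
  have ht : ∏ i ∈ t \ s, g i < 1 := by
    have hsub : t \ s ⊆ s ∪ t := sdiff_subset.trans subset_union_right
    exact prod_lt_one_of_nonempty (fun i hi ↦ (h0 i (hsub hi)).le) (fun i hi ↦ h1 i (hsub hi))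
      (sdiff_nonempty.2 hts)
  have hc : 0 < ∏ i ∈ s ∩ t, g i :=
    prod_pos fun i hi ↦ h0 i (inter_subset_union hi)
  have := prod_union_add_prod_inter_sub_prod_sub_prod s t g
  linarith [mul_pos (mul_pos hc (sub_pos.2 hs)) (sub_pos.2 ht)]

end Finset

theorem tight_sets_chain_general
    {α : Type*} (E : Finset α) (p : α → ℝ)
    (hp : ∀ e ∈ E, 0 < p e ∧ p e < 1)
    (x : α → ℝ)
    (hx : ∀ F ⊆ E, ∑ e ∈ F, x e ≤ 1 - ∏ e ∈ F, (1 - p e))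
    (A B : Finset α) (hA : A ⊆ E) (hB : B ⊆ E)
    (htA : ∑ e ∈ A, x e = 1 - ∏ e ∈ A, (1 - p e))
    (htB : ∑ e ∈ B, x e = 1 - ∏ e ∈ B, (1 - p e)) :
    A ⊆ B ∨ B ⊆ A := by
  classical
  by_contra! ⟨hAB, hBA⟩
  have hAB_E : A ∪ B ⊆ E := Finset.union_subset hA hB
  have hgap := Finset.prod_add_prod_lt_prod_union_add_prod_inter (g := fun e ↦ 1 - p e)
    (fun e he ↦ sub_pos.2 (hp e (hAB_E he)).2) (fun e he ↦ by linarith [(hp e (hAB_E he)).1])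
    hAB hBA
  have hU := hx _ hAB_E
  have hI := hx (A ∩ B) (Finset.inter_subset_left.trans hA)
  have hsum := Finset.sum_union_inter (s₁ := A) (s₂ := B) (f := x)
  linarith

/-- **Tight sets form a chain**: if `x` satisfies `∑_{e∈F} x e ≤ f F` for all `F ⊆ E`
(where `f(F) = 1 - ∏_{e∈F}(1 - p e)` with `0 < p e < 1`), and `A, B ⊆ E` are both tight
for `x`, then `A ⊆ B` or `B ⊆ A`. -/
theorem tight_sets_chain
    {α : Type*} [DecidableEq α] (E : Finset α) (p : α → ℝ)
    (hp : ∀ e ∈ E, 0 < p e ∧ p e < 1)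
    (x : α → ℝ)
    (hx : ∀ F ⊆ E, ∑ e ∈ F, x e ≤ 1 - ∏ e ∈ F, (1 - p e))
    (A B : Finset α) (hA : A ⊆ E) (hB : B ⊆ E)
    (htA : ∑ e ∈ A, x e = 1 - ∏ e ∈ A, (1 - p e))
    (htB : ∑ e ∈ B, x e = 1 - ∏ e ∈ B, (1 - p e)) :
    A ⊆ B ∨ B ⊆ A :=
  tight_sets_chain_general E p hp x hx A B hA hB htA htB
end

section
/- Let x : E → ℝ satisfy x(e) ≥ 0 for all e ∈ E and ∑_{e∈F} x(e) ≤ f(F) for every F ⊆ E. If S ⊆ E is tight for x, i.e. ∑_{e∈S} x(e) = f(S), then x(e) > 0 for every e ∈ S. -/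
/-! Since `S \ {e}` is feasible and `S` is tight, `x e ≥ f S - f (S \ {e})`, and this marginal
value equals `p e * ∏_{a ∈ S \ {e}} (1 - p a) > 0`. -/

open Finset

section

variable {α : Type*}

theorem prod_one_sub_pos {T : Finset α} {p : α → ℝ} (hp : ∀ a ∈ T, p a < 1) :
    0 < ∏ a ∈ T, (1 - p a) :=
  prod_pos fun a ha => sub_pos.2 (hp a ha)

theorem one_sub_prod_one_sub_sub_erase [DecidableEq α] {S : Finset α} {e : α} (p : α → ℝ)
    (he : e ∈ S) :
    (1 - ∏ a ∈ S, (1 - p a)) - (1 - ∏ a ∈ S.erase e, (1 - p a)) =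
      p e * ∏ a ∈ S.erase e, (1 - p a) := by
  rw [← mul_prod_erase S (fun a => 1 - p a) he]
  ring

theorem le_of_sum_eq_of_sum_erase_le [DecidableEq α] {S : Finset α} {e : α} {x : α → ℝ}
    {f : Finset α → ℝ} (he : e ∈ S) (ht : ∑ a ∈ S, x a = f S)
    (hle : ∑ a ∈ S.erase e, x a ≤ f (S.erase e)) :
    f S - f (S.erase e) ≤ x e := by
  rw [← ht, ← add_sum_erase S x he]
  linarith

end

theorem tight_set_positive_coordinates_general
    {α : Type*} (E : Finset α) (p : α → ℝ)
    (hp : ∀ e ∈ E, 0 < p e ∧ p e < 1)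
    (x : α → ℝ)
    (hx : ∀ F ⊆ E, ∑ e ∈ F, x e ≤ 1 - ∏ e ∈ F, (1 - p e))
    (S : Finset α) (hS : S ⊆ E)
    (ht : ∑ e ∈ S, x e = 1 - ∏ e ∈ S, (1 - p e)) :
    ∀ e ∈ S, 0 < x e := by
  classical
  intro e he
  have hgain := le_of_sum_eq_of_sum_erase_le (f := fun F => 1 - ∏ a ∈ F, (1 - p a)) he ht
    (hx _ ((erase_subset e S).trans hS))
  rw [one_sub_prod_one_sub_sub_erase p he] at hgain
  have hrest : 0 < ∏ a ∈ S.erase e, (1 - p a) :=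
    prod_one_sub_pos fun a ha => (hp a (hS (mem_of_mem_erase ha))).2
  exact (mul_pos (hp e (hS he)).1 hrest).trans_le hgain

/-- If `x ≥ 0` satisfies `∑_{e∈F} x e ≤ f F` for all `F ⊆ E`
(where `f(F) = 1 - ∏_{e∈F}(1 - p e)` with `0 < p e < 1`), and `S ⊆ E` is tight for `x`,
then `x e > 0` for every `e ∈ S`. -/
theorem tight_set_positive_coordinates
    {α : Type*} (E : Finset α) (p : α → ℝ)
    (hp : ∀ e ∈ E, 0 < p e ∧ p e < 1)
    (x : α → ℝ) (hxnn : ∀ e ∈ E, 0 ≤ x e)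
    (hx : ∀ F ⊆ E, ∑ e ∈ F, x e ≤ 1 - ∏ e ∈ F, (1 - p e))
    (S : Finset α) (hS : S ⊆ E)
    (ht : ∑ e ∈ S, x e = 1 - ∏ e ∈ S, (1 - p e)) :
    ∀ e ∈ S, 0 < x e :=
  tight_set_positive_coordinates_general E p hp x hx S hS ht
end

section
/- Let y be an extreme point of the polytope P and let Y = {e ∈ E : y(e) > 0} be the set of coordinates where y is nonzero, with k = |Y|. Then there exist subsets S_1 ⊊ S_2 ⊊ … ⊊ S_k of E such that: (1) ∑_{e∈S_i} y(e) = f(S_i) for every i = 1, …, k; and (2) setting S_0 = ∅, each difference S_i \ S_{i−1} contains exactly one element e_i, and y(e_i) > 0 (i.e. e_i ∈ Y). -/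
open Finset

/-- `f(F) = 1 - ∏_{e∈F}(1 - p e)`. -/
noncomputable def fQC {α : Type*} (p : α → ℝ) (F : Finset α) : ℝ :=
  1 - ∏ e ∈ F, (1 - p e)

/-- The polytope `P` of vectors `y ∈ ℝ^E` with `y e ≥ 0` and
`∑_{e∈F} y e ≤ f F` for all `F ⊆ E` (coordinates outside `E` are zero). -/
def qcPolytope {α : Type*} (E : Finset α) (p : α → ℝ) : Set (α → ℝ) :=
  {y | (∀ e ∈ E, 0 ≤ y e) ∧ (∀ e ∉ E, y e = 0) ∧
    ∀ F ⊆ E, ∑ e ∈ F, y e ≤ fQC p F}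

/-- A tight set for `y`. -/
def qcTight {α : Type*} (E : Finset α) (p y : α → ℝ) (T : Finset α) : Prop :=
  T ⊆ E ∧ ∑ e ∈ T, y e = fQC p T

section Aux

variable {α : Type*} [DecidableEq α] {E : Finset α} {p y : α → ℝ}

lemma qcProdPos (hp : ∀ e ∈ E, 0 < p e ∧ p e < 1) {F : Finset α} (hF : F ⊆ E) :
    0 < ∏ e ∈ F, (1 - p e) :=
  Finset.prod_pos fun e he => by have := (hp e (hF he)).2; linarith

lemma qcProdLeOne (hp : ∀ e ∈ E, 0 < p e ∧ p e < 1) {F : Finset α} (hF : F ⊆ E) :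
    ∏ e ∈ F, (1 - p e) ≤ 1 :=
  Finset.prod_le_one (fun e he => by have := (hp e (hF he)).2; linarith)
    (fun e he => by have := (hp e (hF he)).1; linarith)

lemma qcProdLtOne (hp : ∀ e ∈ E, 0 < p e ∧ p e < 1) {F : Finset α} (hF : F ⊆ E)
    (hne : F.Nonempty) : ∏ e ∈ F, (1 - p e) < 1 := by
  obtain ⟨e, he⟩ := hne
  rw [← Finset.mul_prod_erase F _ he]
  have h1 : ∏ x ∈ F.erase e, (1 - p x) ≤ 1 :=
    qcProdLeOne hp ((erase_subset _ _).trans hF)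
  have h2 : 0 < ∏ x ∈ F.erase e, (1 - p x) :=
    qcProdPos hp ((erase_subset _ _).trans hF)
  have hpe := hp e (hF he)
  nlinarith

lemma qcF_erase_lt (hp : ∀ e ∈ E, 0 < p e ∧ p e < 1) {F : Finset α} (hF : F ⊆ E)
    {e : α} (heF : e ∈ F) : fQC p (F.erase e) < fQC p F := by
  unfold fQC
  rw [← Finset.mul_prod_erase F _ heF]
  have h2 : 0 < ∏ x ∈ F.erase e, (1 - p x) :=
    qcProdPos hp ((erase_subset _ _).trans hF)
  have hpe := hp e (hF heF)
  nlinarith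

lemma qcTight_pos (hp : ∀ e ∈ E, 0 < p e ∧ p e < 1) (hyP : y ∈ qcPolytope E p)
    {T : Finset α} (hT : qcTight E p y T) {e : α} (he : e ∈ T) : 0 < y e := by
  by_contra h
  push_neg at h
  have h0 : y e = 0 := le_antisymm h (hyP.1 e (hT.1 he))
  have hsum : ∑ x ∈ T.erase e, y x = ∑ x ∈ T, y x := Finset.sum_erase _ h0
  have hle := hyP.2.2 (T.erase e) ((erase_subset _ _).trans hT.1)
  have hlt := qcF_erase_lt hp hT.1 he
  rw [hsum, hT.2] at hle
  linarith

lemma qcTight_chain (hp : ∀ e ∈ E, 0 < p e ∧ p e < 1) (hyP : y ∈ qcPolytope E p)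
    {A B : Finset α} (hA : qcTight E p y A) (hB : qcTight E p y B) :
    A ⊆ B ∨ B ⊆ A := by
  by_contra h
  push_neg at h
  obtain ⟨a, haA, haB⟩ := not_subset.1 h.1
  obtain ⟨b, hbB, hbA⟩ := not_subset.1 h.2
  have hU : A ∪ B ⊆ E := union_subset hA.1 hB.1
  have hA2 := hA.2
  have hB2 := hB.2
  have c1 := hyP.2.2 (A ∪ B) hU
  have c2 := hyP.2.2 (A ∩ B) (inter_subset_left.trans hA.1)
  simp only [fQC] at hA2 hB2 c1 c2
  have hprod : (∏ e ∈ A ∪ B, (1 - p e)) * ∏ e ∈ A ∩ B, (1 - p e) =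
      (∏ e ∈ A, (1 - p e)) * ∏ e ∈ B, (1 - p e) := Finset.prod_union_inter
  have hUpos : 0 < ∏ e ∈ A ∪ B, (1 - p e) := qcProdPos hp hU
  -- P(A ∪ B) < P A
  have hUA : ∏ e ∈ A ∪ B, (1 - p e) < ∏ e ∈ A, (1 - p e) := by
    have hrw : A ∪ B = A ∪ (B \ A) := by
      rw [Finset.union_sdiff_self_eq_union]
    rw [hrw, Finset.prod_union Finset.disjoint_sdiff]
    have hpos : 0 < ∏ e ∈ A, (1 - p e) := qcProdPos hp hA.1
    have hlt : ∏ e ∈ B \ A, (1 - p e) < 1 :=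
      qcProdLtOne hp ((sdiff_subset).trans hB.1) ⟨b, mem_sdiff.2 ⟨hbB, hbA⟩⟩
    nlinarith
  have hUB : ∏ e ∈ A ∪ B, (1 - p e) < ∏ e ∈ B, (1 - p e) := by
    have hrw : A ∪ B = B ∪ (A \ B) := by
      rw [Finset.union_sdiff_self_eq_union, Finset.union_comm]
    rw [hrw, Finset.prod_union Finset.disjoint_sdiff]
    have hpos : 0 < ∏ e ∈ B, (1 - p e) := qcProdPos hp hB.1
    have hlt : ∏ e ∈ A \ B, (1 - p e) < 1 :=
      qcProdLtOne hp ((sdiff_subset).trans hA.1) ⟨a, mem_sdiff.2 ⟨haA, haB⟩⟩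
    nlinarith
  have hineq : (∏ e ∈ A, (1 - p e)) + ∏ e ∈ B, (1 - p e) <
      (∏ e ∈ A ∪ B, (1 - p e)) + ∏ e ∈ A ∩ B, (1 - p e) := by
    nlinarith [mul_pos (sub_pos.2 hUA) (sub_pos.2 hUB)]
  have hs : ∑ e ∈ A ∪ B, y e + ∑ e ∈ A ∩ B, y e = ∑ e ∈ A, y e + ∑ e ∈ B, y e :=
    Finset.sum_union_inter
  linarith

/-- The perturbation lemma: any direction `v` supported on positive coordinates,
bounded by 1 coordinatewise and setwise, whose sum vanishes on every tight set,
must be zero at an extreme point. -/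
lemma qcPert (hy : y ∈ Set.extremePoints ℝ (qcPolytope E p))
    (v : α → ℝ)
    (hsupp : ∀ e, v e ≠ 0 → e ∈ E ∧ 0 < y e)
    (hb : ∀ e, |v e| ≤ 1)
    (hFb : ∀ F : Finset α, F ⊆ E → |∑ e ∈ F, v e| ≤ 1)
    (htight : ∀ F : Finset α, F ⊆ E → ∑ e ∈ F, y e = fQC p F → ∑ e ∈ F, v e = 0) :
    v = 0 := by
  classical
  by_contra hv
  have hyP := hy.1
  obtain ⟨e₀, he₀⟩ : ∃ e, v e ≠ 0 := by
    by_contra h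
    push_neg at h
    exact hv (funext h)
  set Y := E.filter (fun e => 0 < y e) with hYdef
  have hY0 : Y.Nonempty := ⟨e₀, mem_filter.2 ⟨(hsupp e₀ he₀).1, (hsupp e₀ he₀).2⟩⟩
  set G := E.powerset.filter (fun F => ∑ e ∈ F, v e ≠ 0) with hGdef
  have hG0 : G.Nonempty := by
    refine ⟨{e₀}, mem_filter.2 ⟨mem_powerset.2 ?_, by simpa using he₀⟩⟩
    exact singleton_subset_iff.2 (hsupp e₀ he₀).1
  set ε := min (Y.inf' hY0 y) (G.inf' hG0 fun F => fQC p F - ∑ e ∈ F, y e) with hεdef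
  have hε : 0 < ε := by
    apply lt_min
    · rw [Finset.lt_inf'_iff]
      intro i hi
      exact (mem_filter.1 hi).2
    · rw [Finset.lt_inf'_iff]
      intro F hF
      have hFE : F ⊆ E := mem_powerset.1 (mem_filter.1 hF).1
      have hle := hyP.2.2 F hFE
      have hne : ∑ e ∈ F, y e ≠ fQC p F := fun h => (mem_filter.1 hF).2 (htight F hFE h)
      exact sub_pos.2 (lt_of_le_of_ne hle hne)
  have hεY : ∀ e ∈ Y, ε ≤ y e := fun e he => (min_le_left _ _).trans (Finset.inf'_le _ he)
  have hεG : ∀ F ∈ G, ε ≤ fQC p F - ∑ e ∈ F, y e :=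
    fun F hF => (min_le_right _ _).trans (Finset.inf'_le _ hF)
  have key : ∀ s : ℝ, |s| ≤ 1 → (fun e => y e + s * ε * v e) ∈ qcPolytope E p := by
    intro s hs
    refine ⟨?_, ?_, ?_⟩
    · intro e he
      by_cases hve : v e = 0
      · simpa [hve] using hyP.1 e he
      · have heY : e ∈ Y := mem_filter.2 ⟨(hsupp e hve).1, (hsupp e hve).2⟩
        have h1 := hεY e heY
        have habs : |s * ε * v e| ≤ ε := by
          rw [abs_mul, abs_mul, abs_of_pos hε]
          nlinarith [mul_nonneg (mul_nonneg (abs_nonneg s) hε.le)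
            (sub_nonneg.2 (hb e)), mul_nonneg hε.le (sub_nonneg.2 hs),
            mul_nonneg (abs_nonneg s) hε.le]
        have := neg_abs_le (s * ε * v e)
        simp only
        linarith
    · intro e he
      have hve : v e = 0 := by
        by_contra hvne
        exact he (hsupp e hvne).1
      simp [hve, hyP.2.1 e he]
    · intro F hF
      have hsum : ∑ e ∈ F, (y e + s * ε * v e) =
          (∑ e ∈ F, y e) + s * ε * ∑ e ∈ F, v e := by
        rw [Finset.sum_add_distrib, Finset.mul_sum]
      by_cases hFv : ∑ e ∈ F, v e = 0
      · simp only [hsum, hFv, mul_zero, add_zero]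
        exact hyP.2.2 F hF
      · have hFG : F ∈ G := mem_filter.2 ⟨mem_powerset.2 hF, hFv⟩
        have h1 := hεG F hFG
        have habs : |s * ε * ∑ e ∈ F, v e| ≤ ε := by
          rw [abs_mul, abs_mul, abs_of_pos hε]
          nlinarith [mul_nonneg (mul_nonneg (abs_nonneg s) hε.le)
            (sub_nonneg.2 (hFb F hF)), mul_nonneg hε.le (sub_nonneg.2 hs),
            mul_nonneg (abs_nonneg s) hε.le]
        have := le_abs_self (s * ε * ∑ e ∈ F, v e)
        simp only [hsum]
        linarith
  have hmem1 := key 1 (by norm_num)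
  have hmem2 := key (-1) (by norm_num)
  have hseg : y ∈ openSegment ℝ (fun e => y e + 1 * ε * v e)
      (fun e => y e + (-1) * ε * v e) := by
    refine ⟨1/2, 1/2, by norm_num, by norm_num, by norm_num, ?_⟩
    funext e
    simp only [Pi.add_apply, Pi.smul_apply, smul_eq_mul]
    ring
  have heq := (hy.2 hmem1 hmem2 hseg)
  have : y e₀ + 1 * ε * v e₀ = y e₀ := congrFun heq e₀
  have : ε * v e₀ = 0 := by linarith
  rcases mul_eq_zero.1 this with h | h
  · exact hε.ne' h
  · exact he₀ h

end Aux

/-- **Structure of extreme points (Lemma 2.7)**: for an extreme point `y` of the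
polytope, with `Y = {e ∈ E : y e > 0}` and `k = |Y|`, there is a chain
`∅ = S₀ ⊊ S₁ ⊊ ⋯ ⊊ S_k ⊆ E` such that each `Sᵢ` (for `i ≥ 1`) is tight, and
each difference `Sᵢ \ Sᵢ₋₁` is a singleton `{eᵢ}` with `y eᵢ > 0`. -/
theorem extreme_point_chain
    {α : Type*} [DecidableEq α] (E : Finset α) (p : α → ℝ)
    (hp : ∀ e ∈ E, 0 < p e ∧ p e < 1)
    (y : α → ℝ) (hy : y ∈ Set.extremePoints ℝ (qcPolytope E p))
    (Y : Finset α) (hY : Y = E.filter fun e => 0 < y e)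
    (k : ℕ) (hk : k = Y.card) :
    ∃ S : Fin (k + 1) → Finset α,
      S 0 = ∅ ∧
      (∀ i, S i ⊆ E) ∧
      (∀ i : Fin k, S i.castSucc ⊂ S i.succ) ∧
      (∀ i : Fin k, ∑ e ∈ S i.succ, y e = fQC p (S i.succ)) ∧
      (∀ i : Fin k, ∃ e, S i.succ \ S i.castSucc = {e} ∧ 0 < y e) := by
  classical
  subst hY
  subst hk
  have hyP := hy.1
  -- the empty set is tight
  have hempty : qcTight E p y (∅ : Finset α) := ⟨empty_subset _, by simp [fQC]⟩
  -- every element of Y is in some tight set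
  have hcover : ∀ a ∈ E, 0 < y a → ∃ T, qcTight E p y T ∧ a ∈ T := by
    intro a haE hay
    by_contra h
    push_neg at h
    have hzero := qcPert hy (fun e => if e = a then 1 else 0)
      (fun e hve => by
        simp only [ne_eq, ite_eq_right_iff, one_ne_zero, imp_false, not_not] at hve
        subst hve
        exact ⟨haE, hay⟩)
      (fun e => by by_cases h' : e = a <;> simp [h'])
      (fun F hF => by
        rw [Finset.sum_ite_eq' F a (fun _ => (1 : ℝ))]
        split <;> norm_num)
      (fun F hF htF => by
        rw [Finset.sum_ite_eq' F a (fun _ => (1 : ℝ))]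
        have : a ∉ F := fun haF => h F ⟨hF, htF⟩ haF
        simp [this])
    have := congrFun hzero a
    simp at this
  -- the maximal tight set is Y
  have hYT : qcTight E p y (E.filter fun e => 0 < y e) := by
    set 𝒯 := E.powerset.filter (qcTight E p y) with h𝒯
    have h𝒯ne : 𝒯.Nonempty := ⟨∅, mem_filter.2 ⟨mem_powerset.2 (empty_subset _), hempty⟩⟩
    obtain ⟨Tm, hTm𝒯, hmax⟩ := Finset.exists_max_image 𝒯 card h𝒯ne
    have hTmt : qcTight E p y Tm := (mem_filter.1 hTm𝒯).2
    have heq : Tm = E.filter fun e => 0 < y e := by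
      apply Finset.Subset.antisymm
      · intro e he
        exact mem_filter.2 ⟨hTmt.1 he, qcTight_pos hp hyP hTmt he⟩
      · intro a ha
        obtain ⟨T, hT, haT⟩ := hcover a (mem_filter.1 ha).1 (mem_filter.1 ha).2
        rcases qcTight_chain hp hyP hT hTmt with hsub | hsub
        · exact hsub haT
        · have hT𝒯 : T ∈ 𝒯 := mem_filter.2 ⟨mem_powerset.2 hT.1, hT⟩
          have := hmax T hT𝒯
          have hTeq : T = Tm := (Finset.eq_of_subset_of_card_le hsub this).symm
          rw [← hTeq]
          exact haT
    rw [← heq]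
    exact hTmt
  -- step down: any nonempty tight set has a tight subset with one fewer element
  have hstep : ∀ T, qcTight E p y T → T ≠ ∅ →
      ∃ T', qcTight E p y T' ∧ T' ⊆ T ∧ T'.card + 1 = T.card := by
    intro T hT hTne
    set 𝒮 := E.powerset.filter (fun S => qcTight E p y S ∧ S ⊂ T) with h𝒮
    have h𝒮ne : 𝒮.Nonempty := by
      refine ⟨∅, mem_filter.2 ⟨mem_powerset.2 (empty_subset _), hempty, ?_⟩⟩
      exact Finset.ssubset_iff_subset_ne.2 ⟨empty_subset _, Ne.symm hTne⟩
    obtain ⟨T', hT'mem, hmax'⟩ := Finset.exists_max_image 𝒮 card h𝒮ne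
    have hT't : qcTight E p y T' := (mem_filter.1 hT'mem).2.1
    have hT'ss : T' ⊂ T := (mem_filter.1 hT'mem).2.2
    refine ⟨T', hT't, hT'ss.subset, ?_⟩
    have hcardlt : T'.card < T.card := Finset.card_lt_card hT'ss
    -- claim: |T \ T'| = 1
    have hd : (T \ T').card = 1 := by
      by_contra hd1
      have h1 : 0 < (T \ T').card := by
        rw [Finset.card_pos]
        obtain ⟨x, hxT, hxT'⟩ := Finset.exists_of_ssubset hT'ss
        exact ⟨x, mem_sdiff.2 ⟨hxT, hxT'⟩⟩
      have h2 : 1 < (T \ T').card := by omega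
      obtain ⟨a, ha, b, hb, hab⟩ := Finset.one_lt_card.1 h2
      have haT : a ∈ T := (mem_sdiff.1 ha).1
      have haT' : a ∉ T' := (mem_sdiff.1 ha).2
      have hbT : b ∈ T := (mem_sdiff.1 hb).1
      have hbT' : b ∉ T' := (mem_sdiff.1 hb).2
      set v : α → ℝ := fun e => if e = a then 1 else if e = b then -1 else 0 with hv
      have hvsum : ∀ F : Finset α, ∑ e ∈ F, v e =
          (if a ∈ F then (1:ℝ) else 0) + (if b ∈ F then (-1:ℝ) else 0) := by
        intro F
        have hsplit : v = (fun e => if e = a then (1:ℝ) else 0) +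
            (fun e => if e = b then (-1:ℝ) else 0) := by
          funext e
          by_cases h1 : e = a
          · subst h1
            simp [hv, hab]
          · by_cases h2 : e = b <;> simp [hv, h1, h2, Ne.symm hab]
        rw [hsplit]
        simp only [Pi.add_apply]
        rw [Finset.sum_add_distrib, Finset.sum_ite_eq' F a (fun _ => (1:ℝ)),
          Finset.sum_ite_eq' F b (fun _ => (-1:ℝ))]
      have hzero := qcPert hy v
        (fun e hve => by
          have heab : e = a ∨ e = b := by
            by_contra hcon
            push_neg at hcon
            simp [hv, hcon.1, hcon.2] at hve
          rcases heab with rfl | rfl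
          · exact ⟨hT.1 haT, qcTight_pos hp hyP hT haT⟩
          · exact ⟨hT.1 hbT, qcTight_pos hp hyP hT hbT⟩)
        (fun e => by simp only [hv]; split <;> [norm_num; (split <;> norm_num)])
        (fun F hF => by rw [hvsum F]; split <;> split <;> norm_num)
        (fun F hF htF => by
          rw [hvsum F]
          have hFt : qcTight E p y F := ⟨hF, htF⟩
          rcases qcTight_chain hp hyP hFt hT with hsub | hsub
          · rcases qcTight_chain hp hyP hFt hT't with hsub' | hsub'
            · -- F ⊆ T' : neither a nor b in F
              have haF : a ∉ F := fun hc => haT' (hsub' hc)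
              have hbF : b ∉ F := fun hc => hbT' (hsub' hc)
              simp [haF, hbF]
            · -- T' ⊆ F ⊆ T
              by_cases hFT : F = T
              · subst hFT
                simp [haT, hbT]
              · have hF𝒮 : F ∈ 𝒮 := mem_filter.2 ⟨mem_powerset.2 hF, hFt,
                  Finset.ssubset_iff_subset_ne.2 ⟨hsub, hFT⟩⟩
                have hcle := hmax' F hF𝒮
                have hFeq : F = T' :=
                  (Finset.eq_of_subset_of_card_le hsub' hcle).symm
                subst hFeq
                simp [haT', hbT']
          · -- T ⊆ F : both a and b in F
            simp [hsub haT, hsub hbT])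
      have := congrFun hzero a
      simp [hv] at this
    have hcle : T'.card ≤ T.card := hcardlt.le
    have := Finset.card_sdiff_of_subset hT'ss.subset
    omega
  -- tight sets of every cardinality below a tight set's cardinality
  have hex : ∀ n : ℕ, ∀ T, qcTight E p y T → T.card = n →
      ∀ j, j ≤ n → ∃ T', qcTight E p y T' ∧ T'.card = j := by
    intro n
    induction n with
    | zero =>
      intro T hT h0 j hj
      have : j = 0 := Nat.le_zero.1 hj
      exact ⟨T, hT, by omega⟩
    | succ n ih =>
      intro T hT hc j hj
      rcases eq_or_lt_of_le hj with rfl | hlt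
      · exact ⟨T, hT, hc⟩
      · have hTne : T ≠ ∅ := by
          intro hc'
          rw [hc', Finset.card_empty] at hc
          omega
        obtain ⟨T', hT't, _, hcard⟩ := hstep T hT hTne
        exact ih T' hT't (by omega) j (by omega)
  set Y := E.filter fun e => 0 < y e with hYdef
  have hexk : ∀ i : Fin (Y.card + 1), ∃ T, qcTight E p y T ∧ T.card = (i : ℕ) :=
    fun i => hex Y.card Y hYT rfl i (Nat.lt_succ_iff.1 i.isLt)
  choose S hS1 hS2 using hexk
  have hsub : ∀ i : Fin Y.card, S i.castSucc ⊆ S i.succ := by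
    intro i
    rcases qcTight_chain hp hyP (hS1 i.castSucc) (hS1 i.succ) with h | h
    · exact h
    · exfalso
      have hle := Finset.card_le_card h
      rw [hS2, hS2] at hle
      simp [Fin.coe_castSucc, Fin.val_succ] at hle
  have hssub : ∀ i : Fin Y.card, S i.castSucc ⊂ S i.succ := by
    intro i
    refine Finset.ssubset_iff_subset_ne.2 ⟨hsub i, ?_⟩
    intro hc
    have := hS2 i.castSucc
    rw [hc, hS2] at this
    simp [Fin.coe_castSucc, Fin.val_succ] at this
  refine ⟨S, ?_, fun i => (hS1 i).1, hssub, fun i => (hS1 i.succ).2, ?_⟩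
  · simpa using hS2 0
  · intro i
    have hcd : (S i.succ \ S i.castSucc).card = 1 := by
      rw [Finset.card_sdiff_of_subset (hsub i), hS2, hS2]
      simp [Fin.coe_castSucc, Fin.val_succ]
    obtain ⟨e, he⟩ := Finset.card_eq_one.1 hcd
    refine ⟨e, he, ?_⟩
    have heS : e ∈ S i.succ := by
      have : e ∈ S i.succ \ S i.castSucc := he ▸ Finset.mem_singleton_self e
      exact (mem_sdiff.1 this).1
    exact qcTight_pos hp hyP (hS1 i.succ) heS
end

section
/- The function f is strictly submodular on the lattice family L: for all A, B ∈ L with A \ B ≠ ∅ and B \ A ≠ ∅, one has f(A) + f(B) > f(A ∩ B) + f(A ∪ B). -/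
open Finset

/-- Auxiliary: for positive families, `∏ max + ∏ min > ∏ x + ∏ y` when there are two
indices disagreeing in opposite directions. -/
lemma prod_max_min_gt {ι : Type*} (s : Finset ι) (x y : ι → ℝ)
    (hx : ∀ e ∈ s, 0 < x e) (hy : ∀ e ∈ s, 0 < y e)
    {e1 e2 : ι} (h1 : e1 ∈ s) (h2 : e2 ∈ s)
    (hlt1 : x e1 < y e1) (hlt2 : y e2 < x e2) :
    ∏ e ∈ s, x e + ∏ e ∈ s, y e
      < ∏ e ∈ s, max (x e) (y e) + ∏ e ∈ s, min (x e) (y e) := by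
  set X := ∏ e ∈ s, x e with hX
  set Y := ∏ e ∈ s, y e with hY
  set P := ∏ e ∈ s, max (x e) (y e) with hP
  set Q := ∏ e ∈ s, min (x e) (y e) with hQ
  have hPQ : P * Q = X * Y := by
    rw [hP, hQ, hX, hY, ← Finset.prod_mul_distrib, ← Finset.prod_mul_distrib]
    refine Finset.prod_congr rfl fun e _ => ?_
    rcases le_total (x e) (y e) with h | h
    · rw [max_eq_right h, min_eq_left h]; ring
    · rw [max_eq_left h, min_eq_right h]
  have hPX : X < P := by
    refine Finset.prod_lt_prod hx (fun e he => le_max_left _ _) ⟨e1, h1, ?_⟩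
    exact lt_max_of_lt_right hlt1
  have hPY : Y < P := by
    refine Finset.prod_lt_prod hy (fun e he => le_max_right _ _) ⟨e2, h2, ?_⟩
    exact lt_max_of_lt_left hlt2
  have hXpos : 0 < X := Finset.prod_pos hx
  have hYpos : 0 < Y := Finset.prod_pos hy
  have hPpos : 0 < P := lt_trans hXpos hPX
  nlinarith [mul_pos (sub_pos.mpr hPX) (sub_pos.mpr hPY)]

/-- **Strict submodularity on the lattice family** (Lemma 3.6, property 1):
for `f(F) = 1 - ∏_{e∈E}(1 - ∑_{v : (e,v)∈F} p (e,v))` and sets `A, B` in the lattice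
family `L` (upward-closed in the value coordinate) with `A \ B ≠ ∅` and `B \ A ≠ ∅`,
`f(A) + f(B) > f(A ∩ B) + f(A ∪ B)`. -/
theorem strict_submodular_lattice
    {ε : Type*} [DecidableEq ε] (E : Finset ε) (V : ε → Finset ℝ)
    (hV : ∀ e ∈ E, (V e).Nonempty)
    (p : ε × ℝ → ℝ)
    (hp : ∀ e ∈ E, ∀ v ∈ V e, 0 < p (e, v))
    (hsum : ∀ e ∈ E, ∑ v ∈ V e, p (e, v) < 1)
    (A B : Finset (ε × ℝ))
    (hAsub : ∀ q ∈ A, q.1 ∈ E ∧ q.2 ∈ V q.1)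
    (hBsub : ∀ q ∈ B, q.1 ∈ E ∧ q.2 ∈ V q.1)
    (hAlat : ∀ e v v', (e, v) ∈ A → v' ∈ V e → v ≤ v' → (e, v') ∈ A)
    (hBlat : ∀ e v v', (e, v) ∈ B → v' ∈ V e → v ≤ v' → (e, v') ∈ B)
    (hAB : (A \ B).Nonempty) (hBA : (B \ A).Nonempty) :
    (1 - ∏ e ∈ E, (1 - ∑ v ∈ (V e).filter fun v => (e, v) ∈ A, p (e, v)))
      + (1 - ∏ e ∈ E, (1 - ∑ v ∈ (V e).filter fun v => (e, v) ∈ B, p (e, v)))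
    > (1 - ∏ e ∈ E, (1 - ∑ v ∈ (V e).filter fun v => (e, v) ∈ A ∩ B, p (e, v)))
      + (1 - ∏ e ∈ E, (1 - ∑ v ∈ (V e).filter fun v => (e, v) ∈ A ∪ B, p (e, v))) := by
  classical
  set a : ε → ℝ := fun e => ∑ v ∈ (V e).filter fun v => (e, v) ∈ A, p (e, v) with ha
  set b : ε → ℝ := fun e => ∑ v ∈ (V e).filter fun v => (e, v) ∈ B, p (e, v) with hb
  -- per-edge comparability
  have key : ∀ e : ε, (∀ v ∈ V e, (e, v) ∈ A → (e, v) ∈ B) ∨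
      (∀ v ∈ V e, (e, v) ∈ B → (e, v) ∈ A) := by
    intro e
    by_cases h : ∀ v ∈ V e, (e, v) ∈ A → (e, v) ∈ B
    · exact Or.inl h
    · right
      push_neg at h
      obtain ⟨v, hvV, hvA, hvB⟩ := h
      intro v' hv' hB'
      rcases le_total v v' with hle | hle
      · exact hAlat e v v' hvA hv' hle
      · exact absurd (hBlat e v' v hB' hvV hle) hvB
  -- basic bounds
  have hbnd : ∀ e ∈ E, ∀ (S : Finset (ε × ℝ)),
      0 < 1 - ∑ v ∈ (V e).filter (fun v => (e, v) ∈ S), p (e, v) := by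
    intro e he S
    have h1 : ∑ v ∈ (V e).filter (fun v => (e, v) ∈ S), p (e, v) ≤ ∑ v ∈ V e, p (e, v) := by
      refine Finset.sum_le_sum_of_subset_of_nonneg (Finset.filter_subset _ _) ?_
      intro v hv _
      exact le_of_lt (hp e he v hv)
    linarith [hsum e he]
  -- the witnesses
  obtain ⟨q1, hq1⟩ := hAB
  obtain ⟨q2, hq2⟩ := hBA
  rw [Finset.mem_sdiff] at hq1 hq2
  obtain ⟨e1, v1⟩ := q1
  obtain ⟨e2, v2⟩ := q2
  have he1 : e1 ∈ E := (hAsub _ hq1.1).1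
  have hv1 : v1 ∈ V e1 := (hAsub _ hq1.1).2
  have he2 : e2 ∈ E := (hBsub _ hq2.1).1
  have hv2 : v2 ∈ V e2 := (hBsub _ hq2.1).2
  -- at e1, B ⊆ A (on edge e1) and strictly
  have hkey1 : ∀ v ∈ V e1, (e1, v) ∈ B → (e1, v) ∈ A := by
    rcases key e1 with h | h
    · exact absurd (h v1 hv1 hq1.1) hq1.2
    · exact h
  have hkey2 : ∀ v ∈ V e2, (e2, v) ∈ A → (e2, v) ∈ B := by
    rcases key e2 with h | h
    · exact h
    · exact absurd (h v2 hv2 hq2.1) hq2.2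
  have hba1 : b e1 < a e1 := by
    refine Finset.sum_lt_sum_of_subset ?_ (i := v1) ?_ ?_ (hp e1 he1 v1 hv1) ?_
    · intro v hv
      rw [Finset.mem_filter] at hv ⊢
      exact ⟨hv.1, hkey1 v hv.1 hv.2⟩
    · exact Finset.mem_filter.mpr ⟨hv1, hq1.1⟩
    · intro h; exact hq1.2 (Finset.mem_filter.mp h).2
    · intro v hv _
      exact le_of_lt (hp e1 he1 v (Finset.mem_filter.mp hv).1)
  have hab2 : a e2 < b e2 := by
    refine Finset.sum_lt_sum_of_subset ?_ (i := v2) ?_ ?_ (hp e2 he2 v2 hv2) ?_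
    · intro v hv
      rw [Finset.mem_filter] at hv ⊢
      exact ⟨hv.1, hkey2 v hv.1 hv.2⟩
    · exact Finset.mem_filter.mpr ⟨hv2, hq2.1⟩
    · intro h; exact hq2.2 (Finset.mem_filter.mp h).2
    · intro v hv _
      exact le_of_lt (hp e2 he2 v (Finset.mem_filter.mp hv).1)
  -- rewrite intersection/union products as max/min products
  have hI : ∏ e ∈ E, (1 - ∑ v ∈ (V e).filter fun v => (e, v) ∈ A ∩ B, p (e, v))
      = ∏ e ∈ E, max (1 - a e) (1 - b e) := by
    refine Finset.prod_congr rfl fun e he => ?_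
    rcases key e with h | h
    · have hfe : ((V e).filter fun v => (e, v) ∈ A ∩ B) = (V e).filter fun v => (e, v) ∈ A := by
        refine Finset.filter_congr fun v hv => ?_
        simp only [Finset.mem_inter]
        exact ⟨fun hh => hh.1, fun hh => ⟨hh, h v hv hh⟩⟩
      have hle : a e ≤ b e := by
        refine Finset.sum_le_sum_of_subset_of_nonneg ?_ ?_
        · intro v hv
          rw [Finset.mem_filter] at hv ⊢
          exact ⟨hv.1, h v hv.1 hv.2⟩
        · intro v hv _; exact le_of_lt (hp e he v (Finset.mem_filter.mp hv).1)
      rw [hfe, max_eq_left (by linarith)]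
    · have hfe : ((V e).filter fun v => (e, v) ∈ A ∩ B) = (V e).filter fun v => (e, v) ∈ B := by
        refine Finset.filter_congr fun v hv => ?_
        simp only [Finset.mem_inter]
        exact ⟨fun hh => hh.2, fun hh => ⟨h v hv hh, hh⟩⟩
      have hle : b e ≤ a e := by
        refine Finset.sum_le_sum_of_subset_of_nonneg ?_ ?_
        · intro v hv
          rw [Finset.mem_filter] at hv ⊢
          exact ⟨hv.1, h v hv.1 hv.2⟩
        · intro v hv _; exact le_of_lt (hp e he v (Finset.mem_filter.mp hv).1)
      rw [hfe, max_eq_right (by linarith)]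
  have hU : ∏ e ∈ E, (1 - ∑ v ∈ (V e).filter fun v => (e, v) ∈ A ∪ B, p (e, v))
      = ∏ e ∈ E, min (1 - a e) (1 - b e) := by
    refine Finset.prod_congr rfl fun e he => ?_
    rcases key e with h | h
    · have hfe : ((V e).filter fun v => (e, v) ∈ A ∪ B) = (V e).filter fun v => (e, v) ∈ B := by
        refine Finset.filter_congr fun v hv => ?_
        simp only [Finset.mem_union]
        exact ⟨fun hh => hh.elim (h v hv) id, fun hh => Or.inr hh⟩
      have hle : a e ≤ b e := by
        refine Finset.sum_le_sum_of_subset_of_nonneg ?_ ?_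
        · intro v hv
          rw [Finset.mem_filter] at hv ⊢
          exact ⟨hv.1, h v hv.1 hv.2⟩
        · intro v hv _; exact le_of_lt (hp e he v (Finset.mem_filter.mp hv).1)
      rw [hfe, min_eq_right (by linarith)]
    · have hfe : ((V e).filter fun v => (e, v) ∈ A ∪ B) = (V e).filter fun v => (e, v) ∈ A := by
        refine Finset.filter_congr fun v hv => ?_
        simp only [Finset.mem_union]
        exact ⟨fun hh => hh.elim id (h v hv), fun hh => Or.inl hh⟩
      have hle : b e ≤ a e := by
        refine Finset.sum_le_sum_of_subset_of_nonneg ?_ ?_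
        · intro v hv
          rw [Finset.mem_filter] at hv ⊢
          exact ⟨hv.1, h v hv.1 hv.2⟩
        · intro v hv _; exact le_of_lt (hp e he v (Finset.mem_filter.mp hv).1)
      rw [hfe, min_eq_left (by linarith)]
  rw [hI, hU]
  have hmain := prod_max_min_gt E (fun e => 1 - a e) (fun e => 1 - b e)
    (fun e he => hbnd e he A) (fun e he => hbnd e he B)
    he1 he2 (by simpa using hba1) (by simpa using hab2)
  linarith
end

section
/- Let E be a finite set and a, b : E → ℝ with a(e) > 0 and b(e) > 0 for all e ∈ E. Suppose there exists some e ∈ E with a(e) < b(e) and some e ∈ E with a(e) > b(e). Then ∏_{e∈E} min(a(e), b(e)) + ∏_{e∈E} max(a(e), b(e)) > ∏_{e∈E} a(e) + ∏_{e∈E} b(e). -/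
/-!
Split `E` into `S = {a ≤ b}` and `T = {b < a}`. With `x = ∏_S a < y = ∏_S b` and
`u = ∏_T b < v = ∏_T a`, the four products are `∏ min = x u`, `∏ max = y v`, `∏ a = x v` and
`∏ b = y u`, so the claim is the rearrangement inequality `x v + y u < x u + y v`,
i.e. `0 < (y - x) (v - u)`.
-/

namespace Finset

variable {ι M : Type*} [CommMonoid M] [LinearOrder M] (s : Finset ι) (a b : ι → M)

theorem prod_min_eq_prod_filter_le_mul_prod_filter_not_le :
    ∏ e ∈ s, min (a e) (b e) =
      (∏ e ∈ s with a e ≤ b e, a e) * ∏ e ∈ s with ¬a e ≤ b e, b e := by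
  rw [← prod_filter_mul_prod_filter_not s (fun e => a e ≤ b e)]
  congr 1 <;> refine prod_congr rfl fun e he => ?_ <;> rw [mem_filter] at he
  · exact min_eq_left he.2
  · exact min_eq_right (le_of_not_ge he.2)

theorem prod_max_eq_prod_filter_le_mul_prod_filter_not_le :
    ∏ e ∈ s, max (a e) (b e) =
      (∏ e ∈ s with a e ≤ b e, b e) * ∏ e ∈ s with ¬a e ≤ b e, a e := by
  rw [← prod_filter_mul_prod_filter_not s (fun e => a e ≤ b e)]
  congr 1 <;> refine prod_congr rfl fun e he => ?_ <;> rw [mem_filter] at he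
  · exact max_eq_right he.2
  · exact max_eq_left (le_of_not_ge he.2)

end Finset

open Finset

/-- If `a, b > 0` on `E`, some `e ∈ E` has `a e < b e` and some `e ∈ E` has
`a e > b e`, then
`∏ min(a,b) + ∏ max(a,b) > ∏ a + ∏ b`. -/
theorem min_max_prod_gt
    {ι : Type*} (E : Finset ι) (a b : ι → ℝ)
    (ha : ∀ e ∈ E, 0 < a e) (hb : ∀ e ∈ E, 0 < b e)
    (h₁ : ∃ e ∈ E, a e < b e) (h₂ : ∃ e ∈ E, b e < a e) :
    ∏ e ∈ E, min (a e) (b e) + ∏ e ∈ E, max (a e) (b e)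
      > ∏ e ∈ E, a e + ∏ e ∈ E, b e := by
  have hS : ∏ e ∈ E with a e ≤ b e, a e < ∏ e ∈ E with a e ≤ b e, b e := by
    obtain ⟨e, he, hlt⟩ := h₁
    exact prod_lt_prod (fun e he => ha e (mem_filter.1 he).1) (fun e he => (mem_filter.1 he).2)
      ⟨e, mem_filter.2 ⟨he, hlt.le⟩, hlt⟩
  have hT : ∏ e ∈ E with ¬a e ≤ b e, b e < ∏ e ∈ E with ¬a e ≤ b e, a e := by
    obtain ⟨e, he, hlt⟩ := h₂
    exact prod_lt_prod (fun e he => hb e (mem_filter.1 he).1)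
      (fun e he => le_of_not_ge (mem_filter.1 he).2) ⟨e, mem_filter.2 ⟨he, not_le.2 hlt⟩, hlt⟩
  rw [prod_min_eq_prod_filter_le_mul_prod_filter_not_le,
    prod_max_eq_prod_filter_le_mul_prod_filter_not_le,
    ← prod_filter_mul_prod_filter_not E (fun e => a e ≤ b e) a,
    ← prod_filter_mul_prod_filter_not E (fun e => a e ≤ b e) b]
  exact mul_add_mul_lt_mul_add_mul hS hT
end

section
/- Let y be an extreme point of the polytope P and let Y = {(e, v) ∈ E_all : y(e, v) > 0} be the set of coordinates where y is nonzero, with k = |Y|. Then there exist sets S_1 ⊊ S_2 ⊊ … ⊊ S_k in the lattice family L such that: (1) ∑_{(e,v)∈S_i} y(e, v) = f(S_i) for every i = 1, …, k; and (2) setting S_0 = ∅, for each i the set (S_i \ S_{i−1}) ∩ Y contains exactly one pair (e_i, v_i), and moreover every pair (e, w) ∈ S_i \ S_{i−1} satisfies e = e_i and w ≥ v_i. -/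
open Finset

/-- Membership of a pair in the ground set `E_all = {(e,v) : e ∈ E, v ∈ V e}`. -/
def inGround {ε : Type*} (E : Finset ε) (V : ε → Finset ℝ) (q : ε × ℝ) : Prop :=
  q.1 ∈ E ∧ q.2 ∈ V q.1

/-- Membership in the lattice family `L`: subsets of `E_all` that are upward-closed
in the value coordinate. -/
def inLattice {ε : Type*} (E : Finset ε) (V : ε → Finset ℝ) (F : Finset (ε × ℝ)) : Prop :=
  (∀ q ∈ F, inGround E V q) ∧
    ∀ e v v', (e, v) ∈ F → v' ∈ V e → v ≤ v' → (e, v') ∈ F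

/-- `f(F) = 1 - ∏_{e∈E}(1 - ∑_{v : (e,v)∈F} p (e,v))`. -/
noncomputable def fPoI {ε : Type*} [DecidableEq ε] (E : Finset ε) (V : ε → Finset ℝ)
    (p : ε × ℝ → ℝ) (F : Finset (ε × ℝ)) : ℝ :=
  1 - ∏ e ∈ E, (1 - ∑ v ∈ (V e).filter fun v => (e, v) ∈ F, p (e, v))

/-- The polytope `P` of vectors `y ∈ ℝ^{E_all}` with `y ≥ 0` and
`∑_{(e,v)∈F} y (e,v) ≤ f F` for all `F ∈ L` (coordinates outside `E_all` are zero). -/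
noncomputable def poiPolytope {ε : Type*} [DecidableEq ε] (E : Finset ε)
    (V : ε → Finset ℝ) (p : ε × ℝ → ℝ) : Set (ε × ℝ → ℝ) :=
  {y | (∀ q, inGround E V q → 0 ≤ y q) ∧ (∀ q, ¬ inGround E V q → y q = 0) ∧
    ∀ F : Finset (ε × ℝ), inLattice E V F → ∑ q ∈ F, y q ≤ fPoI E V p F}

/-!
Since the lattice family is closed under union and intersection, with nested slices on every
edge, `f` is submodular on it; it is also strictly increasing. Hence tight sets are closed under
union and intersection, and, `y` being extreme, no nonzero perturbation supported on `Y` sums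
to zero over every tight set. So each point of `Y` lies in a tight set, and between a tight
set `T` and a minimal tight proper superset `T'` at most one point of `Y` is added: two such
points are separated by no tight set, so their difference would be such a perturbation. The least
value of each edge in `T' \ T` has positive `y`, since removing it keeps `T'` in the lattice
family and strictly decreases `f`. Iterating from `∅` gives the chain.
-/

open Filter Topology

theorem Finset.prod_add_prod_le_prod_min_add_prod_max {ι R : Type*} [CommRing R] [LinearOrder R]
    [IsStrictOrderedRing R] (s : Finset ι) {a b : ι → R} (ha : ∀ i ∈ s, 0 ≤ a i)
    (hb : ∀ i ∈ s, 0 ≤ b i) :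
    ∏ i ∈ s, a i + ∏ i ∈ s, b i ≤ ∏ i ∈ s, min (a i) (b i) + ∏ i ∈ s, max (a i) (b i) := by
  classical
  induction s using Finset.induction_on with
  | empty => simp
  | insert x s hx ih =>
    have ha' : ∀ i ∈ s, 0 ≤ a i := fun i hi => ha i (mem_insert_of_mem hi)
    have hb' : ∀ i ∈ s, 0 ≤ b i := fun i hi => hb i (mem_insert_of_mem hi)
    have hmin_nonneg : ∀ i ∈ s, 0 ≤ min (a i) (b i) := fun i hi => le_min (ha' i hi) (hb' i hi)
    have hmin_le_a : ∏ i ∈ s, min (a i) (b i) ≤ ∏ i ∈ s, a i :=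
      prod_le_prod hmin_nonneg fun _ _ => min_le_left _ _
    have hmin_le_b : ∏ i ∈ s, min (a i) (b i) ≤ ∏ i ∈ s, b i :=
      prod_le_prod hmin_nonneg fun _ _ => min_le_right _ _
    have hIH := ih ha' hb'
    simp only [prod_insert hx]
    -- with `A, B, m, M` the four products over `s` and `a x ≤ b x`:
    -- `b M + a m - a A - b B = b (M + m - A - B) + (b - a) (A - m) ≥ 0`
    rcases le_total (a x) (b x) with h | h
    · rw [min_eq_left h, max_eq_right h]
      nlinarith [mul_nonneg (hb x (mem_insert_self x s)) (sub_nonneg.2 hIH),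
        mul_nonneg (sub_nonneg.2 h) (sub_nonneg.2 hmin_le_a)]
    · rw [min_eq_right h, max_eq_left h]
      nlinarith [mul_nonneg (ha x (mem_insert_self x s)) (sub_nonneg.2 hIH),
        mul_nonneg (sub_nonneg.2 h) (sub_nonneg.2 hmin_le_b)]

theorem Set.eq_zero_of_mem_extremePoints_of_eventually {M : Type*} [AddCommGroup M]
    [Module ℝ M] {K : Set M} {y z : M} (hy : y ∈ K.extremePoints ℝ)
    (hz : ∀ᶠ t in 𝓝 (0 : ℝ), y + t • z ∈ K) : z = 0 := by
  have hz' : ∀ᶠ t in 𝓝 (0 : ℝ), y + (-t) • z ∈ K :=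
    (continuous_neg.tendsto' (0 : ℝ) 0 neg_zero).eventually hz
  obtain ⟨t, ⟨hplus, hminus⟩, ht⟩ :=
    (((hz.and hz').filter_mono nhdsWithin_le_nhds).and
      (self_mem_nhdsWithin (s := Set.Ioi 0))).exists
  have hseg : y ∈ openSegment ℝ (y + t • z) (y + (-t) • z) :=
    ⟨1 / 2, 1 / 2, by norm_num, by norm_num, by norm_num, by module⟩
  have hyt : y + t • z = y := hy.2 hplus hminus hseg
  exact (smul_eq_zero.1 (add_eq_left.1 hyt)).resolve_left (ne_of_gt ht)

theorem Real.eventually_add_mul_le {a b c : ℝ} (hab : a ≤ b) (hc : a = b → c = 0) :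
    ∀ᶠ t in 𝓝 (0 : ℝ), a + t * c ≤ b := by
  rcases hab.lt_or_eq with hlt | heq
  · have hlim : Tendsto (fun t : ℝ => a + t * c) (𝓝 0) (𝓝 a) := by
      have hcont : Continuous fun t : ℝ => a + t * c := by fun_prop
      simpa using hcont.tendsto 0
    exact (hlim.eventually_lt_const hlt).mono fun _ => le_of_lt
  · exact Eventually.of_forall fun t => by simp [hc heq, heq]

theorem Finset.card_sdiff_eq_card_sdiff_add_card_sdiff_inter {α : Type*} [DecidableEq α]
    {Y T T' : Finset α} (h : T ⊆ T') : #(Y \ T) = #(Y \ T') + #((T' \ T) ∩ Y) := by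
  rw [← card_sdiff_add_card_inter (Y \ T) T', sdiff_sdiff_left, sup_eq_right.2 h]
  congr 2
  ext; simp only [mem_inter, mem_sdiff]; tauto

theorem exists_chain_of_step {α : Type*} (P : α → Prop) (R : α → α → Prop) (μ : α → ℕ)
    (step : ∀ a, P a → 0 < μ a → ∃ b, P b ∧ R a b ∧ μ a = μ b + 1) :
    ∀ n a, P a → μ a = n → ∃ S : Fin (n + 1) → α,
      S 0 = a ∧ (∀ i, P (S i)) ∧ ∀ i : Fin n, R (S i.castSucc) (S i.succ) := by
  intro n
  induction n with
  | zero => exact fun a ha _ => ⟨fun _ => a, rfl, fun _ => ha, fun i => i.elim0⟩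
  | succ n ih =>
    intro a ha hμ
    obtain ⟨b, hb, hab, hμb⟩ := step a ha (by omega)
    obtain ⟨S, hS0, hS, hSR⟩ := ih b hb (by omega)
    refine ⟨Fin.cons a S, rfl, fun i => Fin.cases ha (fun j => hS j) i, fun i => ?_⟩
    induction i using Fin.cases with
    | zero => simpa [hS0] using hab
    | succ j => simpa [← Fin.succ_castSucc] using hSR j

section Polytope

variable {ε : Type*} {E : Finset ε} {V : ε → Finset ℝ} {F G : Finset (ε × ℝ)}

theorem inLattice_empty : inLattice E V ∅ :=
  ⟨fun _ h => absurd h (notMem_empty _), fun _ _ _ h => absurd h (notMem_empty _)⟩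

theorem inLattice.union [DecidableEq ε] (hF : inLattice E V F) (hG : inLattice E V G) :
    inLattice E V (F ∪ G) := by
  refine ⟨fun q hq => (mem_union.1 hq).elim (hF.1 q) (hG.1 q), fun e v v' hv hv' hle => ?_⟩
  rcases mem_union.1 hv with h | h
  exacts [mem_union_left _ (hF.2 e v v' h hv' hle), mem_union_right _ (hG.2 e v v' h hv' hle)]

theorem inLattice.inter [DecidableEq ε] (hF : inLattice E V F) (hG : inLattice E V G) :
    inLattice E V (F ∩ G) := by
  refine ⟨fun q hq => hF.1 q (mem_inter.1 hq).1, fun e v v' hv hv' hle => ?_⟩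
  obtain ⟨hvF, hvG⟩ := mem_inter.1 hv
  exact mem_inter.2 ⟨hF.2 e v v' hvF hv' hle, hG.2 e v v' hvG hv' hle⟩

theorem inLattice.erase_of_forall_le [DecidableEq ε] (hF : inLattice E V F) {e : ε} {m : ℝ}
    (hm : ∀ v, (e, v) ∈ F → m ≤ v) : inLattice E V (F.erase (e, m)) := by
  refine ⟨fun q hq => hF.1 q (mem_of_mem_erase hq), fun e' v v' hv hv' hle => ?_⟩
  refine mem_erase.2 ⟨fun h => ?_, hF.2 e' v v' (mem_of_mem_erase hv) hv' hle⟩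
  obtain ⟨rfl, rfl⟩ := Prod.mk.inj h
  exact ne_of_mem_erase hv (by rw [le_antisymm hle (hm v (mem_of_mem_erase hv))])

theorem inLattice.edge_subset_or (hF : inLattice E V F) (hG : inLattice E V G) (e : ε) :
    (∀ v, (e, v) ∈ F → (e, v) ∈ G) ∨ (∀ v, (e, v) ∈ G → (e, v) ∈ F) := by
  by_contra! ⟨⟨v, hvF, hvG⟩, ⟨w, hwG, hwF⟩⟩
  rcases le_total v w with h | h
  · exact hwF (hF.2 e v w hvF (hG.1 _ hwG).2 h)
  · exact hvG (hG.2 e w v hwG (hF.1 _ hvF).2 h)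

variable [DecidableEq ε] {p : ε × ℝ → ℝ}

noncomputable def edgeMass (V : ε → Finset ℝ) (p : ε × ℝ → ℝ) (F : Finset (ε × ℝ)) (e : ε) :
    ℝ :=
  ∑ v ∈ (V e).filter fun v => (e, v) ∈ F, p (e, v)

theorem fPoI_eq_one_sub_prod (F : Finset (ε × ℝ)) :
    fPoI E V p F = 1 - ∏ e ∈ E, (1 - edgeMass V p F e) := rfl

theorem edgeMass_congr {e : ε} (h : ∀ v, (e, v) ∈ F ↔ (e, v) ∈ G) :
    edgeMass V p F e = edgeMass V p G e := by
  unfold edgeMass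
  simp only [h]

section Positive

variable (hp : ∀ e ∈ E, ∀ v ∈ V e, 0 < p (e, v))
include hp

theorem edgeMass_mono {e : ε} (he : e ∈ E) (h : ∀ v, (e, v) ∈ F → (e, v) ∈ G) :
    edgeMass V p F e ≤ edgeMass V p G e :=
  sum_le_sum_of_subset_of_nonneg (monotone_filter_right _ fun v _ => h v)
    fun v hv _ => (hp e he v (mem_filter.1 hv).1).le

theorem edgeMass_lt_one (hsum : ∀ e ∈ E, ∑ v ∈ V e, p (e, v) < 1) {e : ε} (he : e ∈ E) :
    edgeMass V p F e < 1 :=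
  lt_of_le_of_lt (sum_le_sum_of_subset_of_nonneg (filter_subset _ _)
    fun v hv _ => (hp e he v hv).le) (hsum e he)

theorem edgeMass_union_inter (hF : inLattice E V F) (hG : inLattice E V G) {e : ε}
    (he : e ∈ E) :
    edgeMass V p (F ∪ G) e = max (edgeMass V p F e) (edgeMass V p G e) ∧
      edgeMass V p (F ∩ G) e = min (edgeMass V p F e) (edgeMass V p G e) := by
  rcases hF.edge_subset_or hG e with h | h
  · rw [max_eq_right (edgeMass_mono hp he h), min_eq_left (edgeMass_mono hp he h)]
    exact ⟨edgeMass_congr fun v => by simpa using h v,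
      edgeMass_congr fun v => by simpa using h v⟩
  · rw [max_eq_left (edgeMass_mono hp he h), min_eq_right (edgeMass_mono hp he h)]
    exact ⟨edgeMass_congr fun v => by simpa using h v,
      edgeMass_congr fun v => by simpa using h v⟩

variable (hsum : ∀ e ∈ E, ∑ v ∈ V e, p (e, v) < 1)
include hsum

theorem fPoI_union_add_inter_le (hF : inLattice E V F) (hG : inLattice E V G) :
    fPoI E V p (F ∪ G) + fPoI E V p (F ∩ G) ≤ fPoI E V p F + fPoI E V p G := by
  have hprod := prod_add_prod_le_prod_min_add_prod_max E
    (a := fun e => 1 - edgeMass V p F e) (b := fun e => 1 - edgeMass V p G e)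
    (fun e he => sub_nonneg.2 (edgeMass_lt_one hp hsum he).le)
    (fun e he => sub_nonneg.2 (edgeMass_lt_one hp hsum he).le)
  have hunion : ∏ e ∈ E, min (1 - edgeMass V p F e) (1 - edgeMass V p G e) =
      ∏ e ∈ E, (1 - edgeMass V p (F ∪ G) e) :=
    prod_congr rfl fun e he => by rw [min_sub_sub_left, (edgeMass_union_inter hp hF hG he).1]
  have hinter : ∏ e ∈ E, max (1 - edgeMass V p F e) (1 - edgeMass V p G e) =
      ∏ e ∈ E, (1 - edgeMass V p (F ∩ G) e) :=
    prod_congr rfl fun e he => by rw [max_sub_sub_left, (edgeMass_union_inter hp hF hG he).2]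
  simp only [fPoI_eq_one_sub_prod]
  linarith

theorem fPoI_lt_of_ssubset (hG : ∀ q ∈ G, inGround E V q) (h : F ⊂ G) :
    fPoI E V p F < fPoI E V p G := by
  obtain ⟨q, hqG, hqF⟩ := exists_of_ssubset h
  have hmass : edgeMass V p F q.1 < edgeMass V p G q.1 := by
    refine sum_lt_sum_of_subset (monotone_filter_right _ fun v _ hv => h.1 hv)
      (i := q.2) (by simpa using ⟨(hG q hqG).2, hqG⟩) (by simpa using fun _ => hqF)
      (hp q.1 (hG q hqG).1 q.2 (hG q hqG).2)
      fun v hv _ => (hp _ (hG q hqG).1 v (mem_filter.1 hv).1).le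
  have hprod : ∏ e ∈ E, (1 - edgeMass V p G e) < ∏ e ∈ E, (1 - edgeMass V p F e) :=
    prod_lt_prod (fun e he => sub_pos.2 (edgeMass_lt_one hp hsum he))
      (fun e he => sub_le_sub_left (edgeMass_mono hp he fun v hv => h.1 hv) 1)
      ⟨q.1, (hG q hqG).1, sub_lt_sub_left hmass 1⟩
  simp only [fPoI_eq_one_sub_prod]
  linarith

end Positive

variable {y z : ε × ℝ → ℝ}

def IsTight (E : Finset ε) (V : ε → Finset ℝ) (p y : ε × ℝ → ℝ) (F : Finset (ε × ℝ)) : Prop :=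
  inLattice E V F ∧ ∑ q ∈ F, y q = fPoI E V p F

theorem isTight_empty : IsTight E V p y ∅ := ⟨inLattice_empty, by simp [fPoI]⟩

noncomputable def ground (E : Finset ε) (V : ε → Finset ℝ) : Finset (ε × ℝ) :=
  E.biUnion fun e => (V e).image fun v => (e, v)

theorem mem_ground {q : ε × ℝ} : q ∈ ground E V ↔ inGround E V q := by
  simp [ground, inGround, Prod.ext_iff, and_comm, eq_comm]

theorem eventually_add_smul_mem_poiPolytope (hy : y ∈ poiPolytope E V p)
    (hzpos : ∀ q, z q ≠ 0 → 0 < y q) (hztight : ∀ F, IsTight E V p y F → ∑ q ∈ F, z q = 0) :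
    ∀ᶠ t in 𝓝 (0 : ℝ), y + t • z ∈ poiPolytope E V p := by
  have hzero : ∀ q, y q = 0 → z q = 0 :=
    fun q hyq => by_contra fun hzq => (hzpos q hzq).ne' hyq
  have hcoord : ∀ᶠ t in 𝓝 (0 : ℝ), ∀ q ∈ ground E V, -y q + t * -z q ≤ 0 :=
    (eventually_all_finset _).2 fun q hq => Real.eventually_add_mul_le
      (neg_nonpos.2 (hy.1 q (mem_ground.1 hq))) fun h => by simpa using hzero q (neg_eq_zero.1 h)
  have hsets : ∀ᶠ t in 𝓝 (0 : ℝ), ∀ F ∈ (ground E V).powerset,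
      inLattice E V F → ∑ q ∈ F, y q + t * ∑ q ∈ F, z q ≤ fPoI E V p F := by
    refine (eventually_all_finset _).2 fun F _ => ?_
    by_cases hF : inLattice E V F
    · exact (Real.eventually_add_mul_le (hy.2.2 F hF) fun h => hztight F ⟨hF, h⟩).mono
        fun _ h _ => h
    · exact Eventually.of_forall fun _ h => absurd h hF
  filter_upwards [hcoord, hsets] with t hcoord hsets
  refine ⟨fun q hq => ?_, fun q hq => ?_, fun F hF => ?_⟩
  · have := hcoord q (mem_ground.2 hq)
    simp only [Pi.add_apply, Pi.smul_apply, smul_eq_mul]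
    linarith
  · simp [hy.2.1 q hq, hzero q (hy.2.1 q hq)]
  · have := hsets F (mem_powerset.2 fun q hq => mem_ground.2 (hF.1 q hq)) hF
    simpa [sum_add_distrib, ← mul_sum] using this

theorem eq_zero_of_sum_eq_zero_of_isTight (hy : y ∈ (poiPolytope E V p).extremePoints ℝ)
    (hzpos : ∀ q, z q ≠ 0 → 0 < y q) (hztight : ∀ F, IsTight E V p y F → ∑ q ∈ F, z q = 0) :
    z = 0 :=
  Set.eq_zero_of_mem_extremePoints_of_eventually hy
    (eventually_add_smul_mem_poiPolytope hy.1 hzpos hztight)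

theorem exists_isTight_mem (hy : y ∈ (poiPolytope E V p).extremePoints ℝ) {q : ε × ℝ}
    (hq : 0 < y q) : ∃ F, IsTight E V p y F ∧ q ∈ F := by
  by_contra! h
  have hz := eq_zero_of_sum_eq_zero_of_isTight hy (z := Pi.single q 1)
    (fun r hr => by rwa [of_not_not fun h' => hr (Pi.single_eq_of_ne h' _)])
    (fun F hF => by simp [sum_pi_single', h F hF])
  simpa using congr_fun hz q

section

variable {T T' : Finset (ε × ℝ)}
  (hp : ∀ e ∈ E, ∀ v ∈ V e, 0 < p (e, v)) (hsum : ∀ e ∈ E, ∑ v ∈ V e, p (e, v) < 1)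
include hp hsum

theorem IsTight.union_inter (hy : y ∈ poiPolytope E V p)
    (hF : IsTight E V p y F) (hG : IsTight E V p y G) :
    IsTight E V p y (F ∪ G) ∧ IsTight E V p y (F ∩ G) := by
  have hunion := hy.2.2 _ (hF.1.union hG.1)
  have hinter := hy.2.2 _ (hF.1.inter hG.1)
  have hsub := fPoI_union_add_inter_le hp hsum hF.1 hG.1
  have hsplit := sum_union_inter (s₁ := F) (s₂ := G) (f := y)
  exact ⟨⟨hF.1.union hG.1, by linarith [hF.2, hG.2]⟩,
    ⟨hF.1.inter hG.1, by linarith [hF.2, hG.2]⟩⟩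

theorem IsTight.pos_of_inLattice_erase (hy : y ∈ poiPolytope E V p)
    (hF : IsTight E V p y F) {q : ε × ℝ} (hq : q ∈ F) (herase : inLattice E V (F.erase q)) :
    0 < y q := by
  have hle := hy.2.2 _ herase
  have hlt := fPoI_lt_of_ssubset hp hsum hF.1.1 (erase_ssubset hq)
  rw [sum_erase_eq_sub hq] at hle
  linarith [hF.2]

theorem IsTight.exists_pos_mem_sdiff_le (hy : y ∈ poiPolytope E V p) (hT : inLattice E V T)
    (hT' : IsTight E V p y T') {q : ε × ℝ} (hq : q ∈ T' \ T) :
    ∃ m ≤ q.2, (q.1, m) ∈ T' \ T ∧ 0 < y (q.1, m) := by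
  obtain ⟨hqT', hqT⟩ := mem_sdiff.1 hq
  obtain ⟨r, hr, hrmin⟩ := (T'.filter fun r => r.1 = q.1).exists_min_image Prod.snd
    ⟨q, mem_filter.2 ⟨hqT', rfl⟩⟩
  obtain ⟨hrT', hrq⟩ := mem_filter.1 hr
  have hr_eq : (q.1, r.2) = r := Prod.ext hrq.symm rfl
  have hle : r.2 ≤ q.2 := hrmin q (mem_filter.2 ⟨hqT', rfl⟩)
  have hrT : (q.1, r.2) ∉ T := fun h => hqT (hT.2 q.1 r.2 q.2 h (hT'.1.1 q hqT').2 hle)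
  have herase : inLattice E V (T'.erase (q.1, r.2)) :=
    hT'.1.erase_of_forall_le fun v hv => hrmin (q.1, v) (mem_filter.2 ⟨hv, rfl⟩)
  refine ⟨r.2, hle, mem_sdiff.2 ⟨hr_eq ▸ hrT', hrT⟩, ?_⟩
  exact hT'.pos_of_inLattice_erase hp hsum hy (hr_eq ▸ hrT') herase

theorem eq_of_pos_of_mem_sdiff_of_minimal (hy : y ∈ (poiPolytope E V p).extremePoints ℝ)
    (hT : IsTight E V p y T) (hT' : IsTight E V p y T') (hTT' : T ⊆ T')
    (hmin : ∀ R, IsTight E V p y R → T ⊂ R → ¬ R ⊂ T') {a b : ε × ℝ}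
    (ha : a ∈ T' \ T) (hb : b ∈ T' \ T) (hya : 0 < y a) (hyb : 0 < y b) : a = b := by
  have hsep : ∀ a b, a ∈ T' \ T → b ∈ T' \ T → ∀ W, IsTight E V p y W → a ∈ W → b ∈ W := by
    intro a b ha hb W hW haW
    by_contra hbW
    obtain ⟨haT', haT⟩ := mem_sdiff.1 ha
    obtain ⟨hbT', hbT⟩ := mem_sdiff.1 hb
    refine hmin ((T ∪ W) ∩ T')
      ((hT.union_inter hp hsum hy.1 hW).1.union_inter hp hsum hy.1 hT').2 ?_ ?_
    · exact (ssubset_iff_of_subset fun r hr => mem_inter.2 ⟨mem_union_left _ hr, hTT' hr⟩).2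
        ⟨a, mem_inter.2 ⟨mem_union_right _ haW, haT'⟩, haT⟩
    · refine (ssubset_iff_of_subset inter_subset_right).2 ⟨b, hbT', fun h => ?_⟩
      exact (mem_union.1 (mem_inter.1 h).1).elim hbT hbW
  by_contra hab
  have hz := eq_zero_of_sum_eq_zero_of_isTight hy (z := Pi.single a 1 - Pi.single b 1)
    (fun r hr => by
      by_cases hra : r = a
      · exact hra ▸ hya
      · have hrb : r = b := by
          by_contra hrb
          simp [Pi.single_eq_of_ne hra, Pi.single_eq_of_ne hrb] at hr
        exact hrb ▸ hyb)
    (fun W hW => by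
      have hiff : a ∈ W ↔ b ∈ W := ⟨hsep a b ha hb W hW, hsep b a hb ha W hW⟩
      simp [sum_sub_distrib, sum_pi_single', hiff])
  simpa [Pi.single_eq_of_ne hab] using congr_fun hz a

theorem exists_isTight_step (hy : y ∈ (poiPolytope E V p).extremePoints ℝ)
    {Y : Finset (ε × ℝ)} (hY : ∀ q, q ∈ Y ↔ 0 < y q) (hT : IsTight E V p y T)
    (hYT : (Y \ T).Nonempty) :
    ∃ T', IsTight E V p y T' ∧ T ⊂ T' ∧ ∃ e v, (T' \ T) ∩ Y = {(e, v)} ∧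
      ∀ q ∈ T' \ T, q.1 = e ∧ v ≤ q.2 := by
  obtain ⟨q, hq⟩ := hYT
  obtain ⟨hqY, hqT⟩ := mem_sdiff.1 hq
  obtain ⟨W, hW, hqW⟩ := exists_isTight_mem hy ((hY q).1 hqY)
  obtain ⟨T', ⟨hT', hTT'⟩, hmin⟩ := wellFounded_lt.has_min {R | IsTight E V p y R ∧ T ⊂ R}
    ⟨T ∪ W, (hT.union_inter hp hsum hy.1 hW).1,
      (ssubset_iff_of_subset subset_union_left).2 ⟨q, mem_union_right _ hqW, hqT⟩⟩
  obtain ⟨q₀, hq₀T', hq₀T⟩ := exists_of_ssubset hTT'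
  obtain ⟨v₀, -, hv₀, hyv₀⟩ :=
    hT'.exists_pos_mem_sdiff_le hp hsum hy.1 hT.1 (mem_sdiff.2 ⟨hq₀T', hq₀T⟩)
  have huniq : ∀ r ∈ T' \ T, 0 < y r → r = (q₀.1, v₀) := fun r hr hyr =>
    eq_of_pos_of_mem_sdiff_of_minimal hp hsum hy hT hT' hTT'.1
      (fun R hR hTR hRT' => hmin R ⟨hR, hTR⟩ hRT') hr hv₀ hyr hyv₀
  refine ⟨T', hT', hTT', q₀.1, v₀, ?_, fun r hr => ?_⟩
  · refine eq_singleton_iff_unique_mem.2 ⟨mem_inter.2 ⟨hv₀, (hY _).2 hyv₀⟩, fun r hr => ?_⟩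
    exact huniq r (mem_inter.1 hr).1 ((hY r).1 (mem_inter.1 hr).2)
  · obtain ⟨m, hm, hmem, hym⟩ := hT'.exists_pos_mem_sdiff_le hp hsum hy.1 hT.1 hr
    obtain ⟨he, hv⟩ := Prod.mk.inj (huniq _ hmem hym)
    exact ⟨he, hv ▸ hm⟩

end

end Polytope

theorem extreme_point_chain_lattice_general
    {ε : Type*} [DecidableEq ε] (E : Finset ε) (V : ε → Finset ℝ)
    (p : ε × ℝ → ℝ)
    (hp : ∀ e ∈ E, ∀ v ∈ V e, 0 < p (e, v))
    (hsum : ∀ e ∈ E, ∑ v ∈ V e, p (e, v) < 1)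
    (y : ε × ℝ → ℝ) (hy : y ∈ Set.extremePoints ℝ (poiPolytope E V p))
    (Y : Finset (ε × ℝ))
    (hY : Y = (E.biUnion fun e => (V e).image fun v => (e, v)).filter fun q => 0 < y q)
    (k : ℕ) (hk : k = Y.card) :
    ∃ S : Fin (k + 1) → Finset (ε × ℝ),
      S 0 = ∅ ∧
      (∀ i, inLattice E V (S i)) ∧
      (∀ i : Fin k, S i.castSucc ⊂ S i.succ) ∧
      (∀ i : Fin k, ∑ q ∈ S i.succ, y q = fPoI E V p (S i.succ)) ∧
      (∀ i : Fin k, ∃ e v,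
        (S i.succ \ S i.castSucc) ∩ Y = {(e, v)} ∧
        ∀ q ∈ S i.succ \ S i.castSucc, q.1 = e ∧ v ≤ q.2) := by
  have hYpos : ∀ q, q ∈ Y ↔ 0 < y q := fun q => by
    rw [hY, mem_filter, and_iff_right_iff_imp]
    exact fun hq => mem_ground.2 (by_contra fun h => hq.ne' (hy.1.2.1 q h))
  obtain ⟨S, hS0, hS, hstep⟩ := exists_chain_of_step (IsTight E V p y)
    (fun T T' => T ⊂ T' ∧ ∃ e v, (T' \ T) ∩ Y = {(e, v)} ∧ ∀ q ∈ T' \ T, q.1 = e ∧ v ≤ q.2)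
    (fun T => #(Y \ T))
    (fun T hT hpos => by
      obtain ⟨T', hT', hTT', e, v, hsing, hjump⟩ :=
        exists_isTight_step hp hsum hy hYpos hT (card_pos.1 hpos)
      refine ⟨T', hT', ⟨hTT', e, v, hsing, hjump⟩, ?_⟩
      rw [card_sdiff_eq_card_sdiff_add_card_sdiff_inter hTT'.1, hsing, card_singleton])
    k ∅ isTight_empty (by rw [sdiff_empty, hk])
  exact ⟨S, hS0, fun i => (hS i).1, fun i => (hstep i).1, fun i => (hS i.succ).2,
    fun i => (hstep i).2⟩

/-- **Structure of extreme points (Lemma 3.7)**: for an extreme point `y` of the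
polytope, with `Y = {(e,v) ∈ E_all : y (e,v) > 0}` and `k = |Y|`, there is a chain
`∅ = S₀ ⊊ S₁ ⊊ ⋯ ⊊ S_k` of sets of the lattice family `L` such that each `Sᵢ`
(for `i ≥ 1`) is tight, `(Sᵢ \ Sᵢ₋₁) ∩ Y` is a singleton `{(eᵢ, vᵢ)}`, and every
pair `(e, w) ∈ Sᵢ \ Sᵢ₋₁` has `e = eᵢ` and `w ≥ vᵢ`. -/
theorem extreme_point_chain_lattice
    {ε : Type*} [DecidableEq ε] (E : Finset ε) (V : ε → Finset ℝ)
    (hV : ∀ e ∈ E, (V e).Nonempty)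
    (p : ε × ℝ → ℝ)
    (hp : ∀ e ∈ E, ∀ v ∈ V e, 0 < p (e, v))
    (hsum : ∀ e ∈ E, ∑ v ∈ V e, p (e, v) < 1)
    (y : ε × ℝ → ℝ) (hy : y ∈ Set.extremePoints ℝ (poiPolytope E V p))
    (Y : Finset (ε × ℝ))
    (hY : Y = (E.biUnion fun e => (V e).image fun v => (e, v)).filter fun q => 0 < y q)
    (k : ℕ) (hk : k = Y.card) :
    ∃ S : Fin (k + 1) → Finset (ε × ℝ),
      S 0 = ∅ ∧
      (∀ i, inLattice E V (S i)) ∧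
      (∀ i : Fin k, S i.castSucc ⊂ S i.succ) ∧
      (∀ i : Fin k, ∑ q ∈ S i.succ, y q = fPoI E V p (S i.succ)) ∧
      (∀ i : Fin k, ∃ e v,
        (S i.succ \ S i.castSucc) ∩ Y = {(e, v)} ∧
        ∀ q ∈ S i.succ \ S i.castSucc, q.1 = e ∧ v ≤ q.2) :=
  extreme_point_chain_lattice_general E V p hp hsum y hy Y hY k hk
end
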